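/- Let G=(V,E) be a finite simple undirected graph with β_e > 1 for all e ∈ E and 0 < λ_v ≤ 1 for all v ∈ V, and let the weighted random cluster model have edge parameters p_e = 1 − 1/β_e and vertex weights λ. Let P_SW^Ising = P_{I→R}·P_{R→I} be the Swendsen-Wang dynamics for the Ising model, and let P_EF be the lazy edge-flipping (Metropolis) dynamics for π_wrc. Then Gap(P_SW^Ising) ≥ Gap(P_EF)/3. -/

import Mathlib

open Finset
open scoped Classical

noncomputable section

variable {V : Type*} [Fintype V] [DecidableEq V]

/-- The vertex set of the connected component of `v` in the graph `(V, S)`. -/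
def compOf (S : Finset (Sym2 V)) (v : V) : Finset V :=
  Finset.univ.filter fun u => (SimpleGraph.fromEdgeSet (↑S : Set (Sym2 V))).Reachable v u

/-- `κ(V,S)`: the set of vertex sets of connected components of the graph `(V, S)`. -/
def kappa (S : Finset (Sym2 V)) : Finset (Finset V) :=
  Finset.univ.image (compOf S)

/-- `∏_{C ∈ κ(V,S)} (1 + ∏_{u ∈ C} λ_u)`. -/
def clusterProd (S : Finset (Sym2 V)) (lam : V → ℝ) : ℝ :=
  ∏ C ∈ kappa S, (1 + ∏ u ∈ C, lam u)

/-- Weight of an edge subset `S ⊆ E₀` in the weighted random cluster model. -/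
def wtWRC (E₀ : Finset (Sym2 V)) (q : Sym2 V → ℝ) (lam : V → ℝ) (S : Finset (Sym2 V)) : ℝ :=
  (∏ e ∈ S, q e) * (∏ f ∈ E₀ \ S, (1 - q f)) * clusterProd S lam

/-- Partition function of the weighted random cluster model. -/
def ZWRC (E₀ : Finset (Sym2 V)) (q : Sym2 V → ℝ) (lam : V → ℝ) : ℝ :=
  ∑ S ∈ E₀.powerset, wtWRC E₀ q lam S

/-- The weighted random cluster distribution. -/
def piWRC (E₀ : Finset (Sym2 V)) (q : Sym2 V → ℝ) (lam : V → ℝ) (S : Finset (Sym2 V)) : ℝ :=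
  wtWRC E₀ q lam S / ZWRC E₀ q lam

/-- The monochromatic edges of a spin configuration `σ`. -/
def monoEdges (E₀ : Finset (Sym2 V)) (σ : V → Bool) : Finset (Sym2 V) :=
  E₀.filter fun e => (e.map σ).IsDiag

/-- Weight of a spin configuration in the Ising model. -/
def wtIsing (E₀ : Finset (Sym2 V)) (β : Sym2 V → ℝ) (lam : V → ℝ) (σ : V → Bool) : ℝ :=
  (∏ e ∈ monoEdges E₀ σ, β e) * ∏ v : V, (if σ v then lam v else 1)

/-- Ising partition function. -/
def ZIsing (E₀ : Finset (Sym2 V)) (β : Sym2 V → ℝ) (lam : V → ℝ) : ℝ :=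
  ∑ σ : V → Bool, wtIsing E₀ β lam σ

/-- Ising Gibbs distribution. -/
def piIsing (E₀ : Finset (Sym2 V)) (β : Sym2 V → ℝ) (lam : V → ℝ) (σ : V → Bool) : ℝ :=
  wtIsing E₀ β lam σ / ZIsing E₀ β lam

/-- Vertices of odd degree in the graph `(V, S)`. -/
def oddVerts (S : Finset (Sym2 V)) : Finset V :=
  Finset.univ.filter fun v => Odd (S.filter fun e => v ∈ e).card

/-- Weight of an edge subset in the subgraph-world model. -/
def wtSG (E₀ : Finset (Sym2 V)) (p : Sym2 V → ℝ) (η : V → ℝ) (S : Finset (Sym2 V)) : ℝ :=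
  (∏ e ∈ S, p e) * (∏ f ∈ E₀ \ S, (1 - p f)) * ∏ v ∈ oddVerts S, η v

/-- Subgraph-world partition function. -/
def ZSG (E₀ : Finset (Sym2 V)) (p : Sym2 V → ℝ) (η : V → ℝ) : ℝ :=
  ∑ S ∈ E₀.powerset, wtSG E₀ p η S

/-- Subgraph-world distribution. -/
def piSG (E₀ : Finset (Sym2 V)) (p : Sym2 V → ℝ) (η : V → ℝ) (S : Finset (Sym2 V)) : ℝ :=
  wtSG E₀ p η S / ZSG E₀ p η

/-- The transformation `P_{I→R}` from Ising configurations to edge subsets. -/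
def PIR (E₀ : Finset (Sym2 V)) (β : Sym2 V → ℝ) (σ : V → Bool) (S : Finset (Sym2 V)) : ℝ :=
  if S ⊆ monoEdges E₀ σ then
    (∏ e ∈ S, (1 - (β e)⁻¹)) * ∏ f ∈ monoEdges E₀ σ \ S, (β f)⁻¹
  else 0

/-- The transformation `P_{R→I}` from edge subsets to Ising configurations. -/
def PRI (E₀ : Finset (Sym2 V)) (lam : V → ℝ) (S : Finset (Sym2 V)) (σ : V → Bool) : ℝ :=
  if S ⊆ monoEdges E₀ σ then
    ∏ C ∈ kappa S, ((∏ v ∈ C, if σ v then lam v else 1) / (1 + ∏ v ∈ C, lam v))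
  else 0

/-- Swendsen-Wang dynamics for the Ising model: `P_{I→R} ⬝ P_{R→I}`. -/
def PSWIsing (E₀ : Finset (Sym2 V)) (β : Sym2 V → ℝ) (lam : V → ℝ) (σ τ : V → Bool) : ℝ :=
  ∑ S ∈ E₀.powerset, PIR E₀ β σ S * PRI E₀ lam S τ

/-- Swendsen-Wang dynamics for the weighted random cluster model: `P_{R→I} ⬝ P_{I→R}`. -/
def PSWwrc (E₀ : Finset (Sym2 V)) (β : Sym2 V → ℝ) (lam : V → ℝ)
    (S S' : Finset (Sym2 V)) : ℝ :=
  ∑ σ : V → Bool, PRI E₀ lam S σ * PIR E₀ β σ S'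

/-- Lazy edge-flipping (Metropolis) dynamics for a distribution `pi` on subsets of `E₀`. -/
def PEF (E₀ : Finset (Sym2 V)) (pi : Finset (Sym2 V) → ℝ) (x y : Finset (Sym2 V)) : ℝ :=
  if x = y then
    1 - (1 / (2 * (E₀.card : ℝ))) * ∑ e ∈ E₀, min 1 (pi (symmDiff x {e}) / pi x)
  else if (symmDiff x y).card = 1 then
    (1 / (2 * (E₀.card : ℝ))) * min 1 (pi y / pi x)
  else 0

/-- Variance of `f` with respect to a distribution `pi` supported on `states`. -/
def varOn {α : Type*} (states : Finset α) (pi f : α → ℝ) : ℝ :=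
  (∑ x ∈ states, pi x * f x ^ 2) - (∑ x ∈ states, pi x * f x) ^ 2

/-- Dirichlet form of a Markov kernel `P` with stationary distribution `pi` on `states`. -/
def dirichletOn {α : Type*} (states : Finset α) (pi : α → ℝ) (P : α → α → ℝ) (f : α → ℝ) : ℝ :=
  ∑ x ∈ states, pi x * f x * (f x - ∑ y ∈ states, P x y * f y)

/-- Spectral gap of a reversible Markov kernel `P` with stationary distribution `pi`. -/
def gapOn {α : Type*} (states : Finset α) (pi : α → ℝ) (P : α → α → ℝ) : ℝ :=
  sInf ((fun f : α → ℝ => dirichletOn states pi P f / varOn states pi f) ''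
    {f | varOn states pi f ≠ 0})

/-- Total variation distance between two distributions on `states`. -/
def dTV {α : Type*} (states : Finset α) (μ ν : α → ℝ) : ℝ :=
  (1 / 2) * ∑ z ∈ states, |μ z - ν z|

/-- `t`-step transition probabilities of the Markov kernel `P` on state space `states`. -/
def kpow {α : Type*} (states : Finset α) (P : α → α → ℝ) : ℕ → α → α → ℝ
  | 0 => fun x y => if x = y then 1 else 0
  | (t + 1) => fun x y => ∑ z ∈ states, P x z * kpow states P t z y

end

/-!
The Edwards–Sokal identity `π_Ising(σ) P_{I→R}(σ, S) = π_wrc(S) P_{R→I}(S, σ)` makes `P_{I→R}`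
and `P_{R→I}` adjoint operators between `L²(π_wrc)` and `L²(π_Ising)`. An operator and its
adjoint contract variances by the same factor, so the Swendsen–Wang chain
`P_{I→R} P_{R→I}` on spins has at least the spectral gap of the chain `P_{R→I} P_{I→R}` on
edge sets, and it suffices to compare the latter with the edge-flip chain.

By the law of total variance, the Dirichlet form of `P_{R→I} P_{I→R}` is the `π_Ising`-average
of the variance under the product measure `P_{I→R}(σ, ·)`, which dominates the conditional
variance of each single edge. Adding an edge to `S` divides `∏_C (1 + λ^C)` by at most 3 when
`λ ≤ 1`, so `min(π_wrc(S), π_wrc(S ∪ e)) ≤ 4 π_wrc(S ∪ e) / β_e`, and comparing the two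
Dirichlet forms edge by edge gives `E_EF ≤ 2 E_{R→I→R}`: the gap is at least `Gap(P_EF) / 2`.
-/

section Products

variable {ι : Type*} [DecidableEq ι]

lemma prod_mul_prod_sdiff_inv {f : ι → ℝ} {M S : Finset ι} (hS : S ⊆ M) (hf : ∀ i ∈ M, f i ≠ 0) :
    (∏ i ∈ M, f i) * ∏ i ∈ M \ S, (f i)⁻¹ = ∏ i ∈ S, f i := by
  rw [← prod_sdiff hS, prod_inv_distrib, mul_comm (∏ i ∈ M \ S, f i), mul_assoc,
    mul_inv_cancel₀ (prod_ne_zero_iff.2 fun i hi => hf i (mem_sdiff.1 hi).1), mul_one]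

lemma prod_insert_mul_prod_sdiff_insert {R : Type*} [CommMonoid R] (f g : ι → R)
    {M T : Finset ι} {i : ι} (hi : i ∈ M) (hiT : i ∉ T) :
    (∏ j ∈ insert i T, f j) * (∏ j ∈ M \ insert i T, g j) * g i =
      (∏ j ∈ T, f j) * (∏ j ∈ M \ T, g j) * f i := by
  rw [prod_insert hiT, sdiff_insert, ← mul_prod_erase (M \ T) g (mem_sdiff.2 ⟨hi, hiT⟩)]
  simp only [mul_comm, mul_left_comm, mul_assoc]

lemma sum_powerset_eq_sum_powerset_erase {R : Type*} [AddCommMonoid R] {M : Finset ι} {i : ι}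
    (hi : i ∈ M) (f : Finset ι → R) :
    ∑ T ∈ M.powerset, f T = ∑ T ∈ (M.erase i).powerset, (f T + f (insert i T)) := by
  conv_lhs => rw [← insert_erase hi]
  rw [sum_powerset_insert (notMem_erase i M), sum_add_distrib]

end Products

section Variance

variable {α : Type*} {s : Finset α} {μ : α → ℝ}

def covOn (s : Finset α) (μ u w : α → ℝ) : ℝ :=
  (∑ x ∈ s, μ x * u x * w x) - (∑ x ∈ s, μ x * u x) * (∑ x ∈ s, μ x * w x)

lemma varOn_eq_covOn (f : α → ℝ) : varOn s μ f = covOn s μ f f := by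
  simp only [varOn, covOn, sq, mul_assoc]

lemma covOn_eq_sum_mul_sub_mean (hμ : ∑ x ∈ s, μ x = 1) (u w : α → ℝ) :
    covOn s μ u w = ∑ x ∈ s, μ x * ((u x - ∑ y ∈ s, μ y * u y) * (w x - ∑ y ∈ s, μ y * w y)) := by
  set a := ∑ y ∈ s, μ y * u y
  set b := ∑ y ∈ s, μ y * w y
  have hexp : ∀ x, μ x * ((u x - a) * (w x - b))
      = μ x * u x * w x - b * (μ x * u x) - a * (μ x * w x) + a * b * μ x := fun x => by ring
  simp only [covOn, hexp, sum_add_distrib, sum_sub_distrib, ← mul_sum, hμ]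
  ring

lemma varOn_eq_sum_mul_sq_sub_mean (hμ : ∑ x ∈ s, μ x = 1) (f : α → ℝ) :
    varOn s μ f = ∑ x ∈ s, μ x * (f x - ∑ y ∈ s, μ y * f y) ^ 2 := by
  simp only [varOn_eq_covOn, covOn_eq_sum_mul_sub_mean hμ, sq]

lemma varOn_nonneg (hμ0 : ∀ x ∈ s, 0 ≤ μ x) (hμ : ∑ x ∈ s, μ x = 1) (f : α → ℝ) :
    0 ≤ varOn s μ f := by
  rw [varOn_eq_sum_mul_sq_sub_mean hμ]
  exact sum_nonneg fun x hx => mul_nonneg (hμ0 x hx) (sq_nonneg _)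

lemma covOn_sq_le (hμ0 : ∀ x ∈ s, 0 ≤ μ x) (hμ : ∑ x ∈ s, μ x = 1) (u w : α → ℝ) :
    covOn s μ u w ^ 2 ≤ varOn s μ u * varOn s μ w := by
  simp only [varOn_eq_covOn, covOn_eq_sum_mul_sub_mean hμ]
  exact sum_sq_le_sum_mul_sum_of_sq_le_mul s
    (fun x hx => mul_nonneg (hμ0 x hx) (mul_self_nonneg _))
    (fun x hx => mul_nonneg (hμ0 x hx) (mul_self_nonneg _)) fun x _ => le_of_eq (by ring)

lemma exists_varOn_ne_zero (hμ0 : ∀ x ∈ s, 0 < μ x) (hμ : ∑ x ∈ s, μ x = 1) {a b : α}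
    (ha : a ∈ s) (hb : b ∈ s) (hab : a ≠ b) : ∃ f, varOn s μ f ≠ 0 := by
  refine ⟨fun x => if x = a then 1 else 0, ?_⟩
  have hsum : ∀ c : ℝ, ∑ x ∈ s, μ x * (if x = a then c else 0) = μ a * c := fun c => by
    simp [ha]
  have hab' : μ a + μ b ≤ 1 := by
    rw [← sum_pair hab, ← hμ]
    exact sum_le_sum_of_subset_of_nonneg (insert_subset ha (singleton_subset_iff.2 hb))
      fun x hx _ => (hμ0 x hx).le
  have hvar : varOn s μ (fun x => if x = a then 1 else 0) = μ a * (1 - μ a) := by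
    simp only [varOn, apply_ite (· ^ 2), one_pow, zero_pow two_ne_zero, hsum]
    ring
  rw [hvar]
  nlinarith [hμ0 a ha, hμ0 b hb]

end Variance

section Gap

variable {α : Type*} {s : Finset α} {μ : α → ℝ} {P : α → α → ℝ}

lemma gapOn_le_div (hE : ∀ f, 0 ≤ dirichletOn s μ P f) (hV : ∀ f, 0 ≤ varOn s μ f)
    {f : α → ℝ} (hf : varOn s μ f ≠ 0) :
    gapOn s μ P ≤ dirichletOn s μ P f / varOn s μ f :=
  csInf_le ⟨0, by rintro _ ⟨g, -, rfl⟩; exact div_nonneg (hE g) (hV g)⟩ ⟨f, hf, rfl⟩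

lemma gapOn_mul_varOn_le (hE : ∀ f, 0 ≤ dirichletOn s μ P f) (hV : ∀ f, 0 ≤ varOn s μ f)
    (f : α → ℝ) : gapOn s μ P * varOn s μ f ≤ dirichletOn s μ P f := by
  rcases (hV f).eq_or_lt with hf | hf
  · rw [← hf, mul_zero]
    exact hE f
  · exact (le_div_iff₀ hf).1 (gapOn_le_div hE hV hf.ne')

lemma gapOn_le_of_dirichletOn_le (hE : ∀ f, 0 ≤ dirichletOn s μ P f)
    (hV : ∀ f, 0 ≤ varOn s μ f) {c : ℝ} (hc : 0 ≤ c)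
    (h : ∀ f, dirichletOn s μ P f ≤ c * varOn s μ f) : gapOn s μ P ≤ c := by
  by_cases hne : ∃ f, varOn s μ f ≠ 0
  · obtain ⟨f, hf⟩ := hne
    exact (gapOn_le_div hE hV hf).trans
      ((div_le_iff₀ ((hV f).lt_of_ne' hf)).2 (h f))
  · simp only [not_exists, not_not] at hne
    simp [gapOn, hne, hc]

lemma le_gapOn (hV : ∀ f, 0 ≤ varOn s μ f) {δ : ℝ}
    (h : ∀ f, δ * varOn s μ f ≤ dirichletOn s μ P f)
    (hδ : δ ≤ 0 ∨ ∃ f, varOn s μ f ≠ 0) : δ ≤ gapOn s μ P := by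
  by_cases hne : ∃ f, varOn s μ f ≠ 0
  · obtain ⟨f, hf⟩ := hne
    refine le_csInf ⟨_, f, hf, rfl⟩ ?_
    rintro _ ⟨g, hg, rfl⟩
    exact (le_div_iff₀ ((hV g).lt_of_ne' hg)).2 (h g)
  · have hδ0 : δ ≤ 0 := hδ.resolve_right hne
    simp only [not_exists, not_not] at hne
    simpa [gapOn, hne] using hδ0

lemma gapOn_nonneg (hE : ∀ f, 0 ≤ dirichletOn s μ P f) (hV : ∀ f, 0 ≤ varOn s μ f) :
    0 ≤ gapOn s μ P :=
  Real.sInf_nonneg <| by rintro _ ⟨f, -, rfl⟩; exact div_nonneg (hE f) (hV f)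

end Gap

section AdjointPair

variable {α γ : Type*}

def kernelApply (t : Finset γ) (K : α → γ → ℝ) (g : γ → ℝ) (x : α) : ℝ :=
  ∑ y ∈ t, K x y * g y

def kernelComp (t : Finset γ) (K : α → γ → ℝ) (L : γ → α → ℝ) (x x' : α) : ℝ :=
  ∑ y ∈ t, K x y * L y x'

structure IsAdjointPair (s : Finset α) (t : Finset γ) (μ : α → ℝ) (ν : γ → ℝ)
    (K : α → γ → ℝ) (L : γ → α → ℝ) : Prop where
  sum_left : ∀ x ∈ s, ∑ y ∈ t, K x y = 1
  sum_right : ∀ y ∈ t, ∑ x ∈ s, L y x = 1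
  balance : ∀ x ∈ s, ∀ y ∈ t, μ x * K x y = ν y * L y x

namespace IsAdjointPair

variable {s : Finset α} {t : Finset γ} {μ : α → ℝ} {ν : γ → ℝ} {K : α → γ → ℝ}
  {L : γ → α → ℝ}

theorem symm (h : IsAdjointPair s t μ ν K L) : IsAdjointPair t s ν μ L K :=
  ⟨h.sum_right, h.sum_left, fun y hy x hx => (h.balance x hx y hy).symm⟩

theorem sum_mul_left (h : IsAdjointPair s t μ ν K L) {y : γ} (hy : y ∈ t) :
    ∑ x ∈ s, μ x * K x y = ν y := by
  rw [sum_congr rfl fun x hx => h.balance x hx y hy, ← mul_sum, h.sum_right y hy, mul_one]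

theorem sum_mul_kernelApply_mul (h : IsAdjointPair s t μ ν K L) (u : α → ℝ) (w : γ → ℝ) :
    ∑ y ∈ t, ν y * kernelApply s L u y * w y = ∑ x ∈ s, μ x * u x * kernelApply t K w x := by
  simp only [kernelApply, mul_sum, sum_mul]
  rw [sum_comm]
  refine sum_congr rfl fun x hx => sum_congr rfl fun y hy => ?_
  linear_combination -(u x * w y) * h.balance x hx y hy

theorem sum_mul_kernelApply (h : IsAdjointPair s t μ ν K L) (u : α → ℝ) :
    ∑ y ∈ t, ν y * kernelApply s L u y = ∑ x ∈ s, μ x * u x := by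
  calc ∑ y ∈ t, ν y * kernelApply s L u y = ∑ y ∈ t, ν y * kernelApply s L u y * 1 := by
        simp only [mul_one]
    _ = ∑ x ∈ s, μ x * u x * kernelApply t K (fun _ => 1) x := h.sum_mul_kernelApply_mul u _
    _ = ∑ x ∈ s, μ x * u x := sum_congr rfl fun x hx => by
        rw [kernelApply, sum_congr rfl fun y _ => mul_one (K x y), h.sum_left x hx, mul_one]

theorem covOn_kernelApply (h : IsAdjointPair s t μ ν K L) (u : α → ℝ) (w : γ → ℝ) :
    covOn t ν (kernelApply s L u) w = covOn s μ u (kernelApply t K w) := by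
  rw [covOn, covOn, h.sum_mul_kernelApply_mul, h.sum_mul_kernelApply, h.symm.sum_mul_kernelApply]

theorem dirichletOn_kernelComp (h : IsAdjointPair s t μ ν K L) (f : α → ℝ) :
    dirichletOn s μ (kernelComp t K L) f = varOn s μ f - varOn t ν (kernelApply s L f) := by
  have hKL : ∀ x, ∑ x' ∈ s, kernelComp t K L x x' * f x'
      = kernelApply t K (kernelApply s L f) x := fun x => by
    simp only [kernelComp, kernelApply, sum_mul, mul_sum, mul_assoc]
    exact sum_comm
  have := h.sum_mul_kernelApply_mul f (kernelApply s L f)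
  simp only [dirichletOn, hKL, varOn, h.sum_mul_kernelApply, mul_sub, sum_sub_distrib]
  simp only [sq, ← mul_assoc] at this ⊢
  rw [this]
  ring

/-- Adjoint operators have the same norm on centred functions. -/
theorem varOn_kernelApply_le (h : IsAdjointPair s t μ ν K L) (hμ0 : ∀ x ∈ s, 0 ≤ μ x)
    (hμ : ∑ x ∈ s, μ x = 1) {c : ℝ} (hc : 0 ≤ c)
    (hK : ∀ g, varOn s μ (kernelApply t K g) ≤ c * varOn t ν g) (f : α → ℝ) :
    varOn t ν (kernelApply s L f) ≤ c * varOn s μ f := by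
  set v := varOn t ν (kernelApply s L f)
  have hcov : v = covOn s μ f (kernelApply t K (kernelApply s L f)) := by
    rw [← h.covOn_kernelApply, ← varOn_eq_covOn]
  have hcs : v ^ 2 ≤ varOn s μ f * (c * v) :=
    hcov ▸ (covOn_sq_le hμ0 hμ _ _).trans
      (mul_le_mul_of_nonneg_left (hcov ▸ hK _) (varOn_nonneg hμ0 hμ f))
  rcases le_or_gt v 0 with hv | hv
  · exact hv.trans (mul_nonneg hc (varOn_nonneg hμ0 hμ f))
  · nlinarith

theorem mul_varOn_le_dirichletOn_kernelComp (h : IsAdjointPair s t μ ν K L)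
    (hμ0 : ∀ x ∈ s, 0 ≤ μ x) (hμ : ∑ x ∈ s, μ x = 1) {δ : ℝ} (hδ : δ ≤ 1)
    (hLK : ∀ g, δ * varOn t ν g ≤ dirichletOn t ν (kernelComp s L K) g) (f : α → ℝ) :
    δ * varOn s μ f ≤ dirichletOn s μ (kernelComp t K L) f := by
  have hK : ∀ g, varOn s μ (kernelApply t K g) ≤ (1 - δ) * varOn t ν g := fun g => by
    linarith [hLK g, h.symm.dirichletOn_kernelComp g]
  rw [h.dirichletOn_kernelComp]
  linarith [h.varOn_kernelApply_le hμ0 hμ (by linarith) hK f]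

/-- The law of total variance. -/
theorem dirichletOn_kernelComp_symm (h : IsAdjointPair s t μ ν K L) (g : γ → ℝ) :
    dirichletOn t ν (kernelComp s L K) g = ∑ x ∈ s, μ x * varOn t (K x) g := by
  rw [h.symm.dirichletOn_kernelComp]
  have hsq : ∑ y ∈ t, ν y * g y ^ 2 = ∑ x ∈ s, μ x * ∑ y ∈ t, K x y * g y ^ 2 := by
    simp only [mul_sum, ← mul_assoc]
    rw [sum_comm]
    exact sum_congr rfl fun y hy => by rw [← sum_mul, h.sum_mul_left hy]
  simp only [varOn, mul_sub, sum_sub_distrib, ← h.symm.sum_mul_kernelApply g, hsq]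
  simp [kernelApply]

theorem div_le_gapOn_kernelComp (h : IsAdjointPair s t μ ν K L)
    (hμ0 : ∀ x ∈ s, 0 ≤ μ x) (hμ : ∑ x ∈ s, μ x = 1) (hν0 : ∀ y ∈ t, 0 ≤ ν y)
    (hν : ∑ y ∈ t, ν y = 1) {P : γ → γ → ℝ} {c : ℝ} (hc : 0 < c)
    (hP : ∀ g, 0 ≤ dirichletOn t ν P g)
    (hcmp : ∀ g, dirichletOn t ν P g ≤ c * dirichletOn t ν (kernelComp s L K) g)
    (hne : gapOn t ν P ≤ 0 ∨ ∃ f, varOn s μ f ≠ 0) :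
    gapOn t ν P / c ≤ gapOn s μ (kernelComp t K L) := by
  have hVν := varOn_nonneg hν0 hν
  have hLK : ∀ g, dirichletOn t ν (kernelComp s L K) g ≤ varOn t ν g := fun g => by
    rw [h.symm.dirichletOn_kernelComp]
    linarith [varOn_nonneg hμ0 hμ (kernelApply t K g)]
  have hγ : gapOn t ν P ≤ c := gapOn_le_of_dirichletOn_le hP hVν hc.le fun g =>
    (hcmp g).trans (mul_le_mul_of_nonneg_left (hLK g) hc.le)
  refine le_gapOn (varOn_nonneg hμ0 hμ)
    (h.mul_varOn_le_dirichletOn_kernelComp hμ0 hμ ((div_le_one hc).2 hγ) fun g => ?_)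
    (hne.imp_left fun h0 => div_nonpos_of_nonpos_of_nonneg h0 hc.le)
  rw [div_mul_eq_mul_div, div_le_iff₀' hc]
  exact (gapOn_mul_varOn_le hP hVν g).trans (hcmp g)

end IsAdjointPair

end AdjointPair

section Clusters

variable {V : Type*} [Fintype V]

noncomputable def monoSpins (S : Finset (Sym2 V)) : Finset (V → Bool) :=
  univ.filter fun σ => ∀ e ∈ S, (e.map σ).IsDiag

def spinWeight (lam : V → ℝ) (σ : V → Bool) : ℝ :=
  ∏ v, if σ v then lam v else 1

lemma spinWeight_nonneg {lam : V → ℝ} (hlam : ∀ v, 0 ≤ lam v) (σ : V → Bool) :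
    0 ≤ spinWeight lam σ :=
  prod_nonneg fun v _ => by split_ifs <;> simp [hlam v]

lemma subset_monoEdges_iff {E₀ S : Finset (Sym2 V)} (hS : S ⊆ E₀) (σ : V → Bool) :
    S ⊆ monoEdges E₀ σ ↔ σ ∈ monoSpins S := by
  simp only [monoSpins, monoEdges, mem_filter, mem_univ, true_and, subset_iff]
  exact ⟨fun h e he => (h he).2, fun h e he => ⟨hS he, h e he⟩⟩

variable [DecidableEq V] {S : Finset (Sym2 V)} {lam : V → ℝ}

lemma mem_compOf {v u : V} :
    u ∈ compOf S v ↔ (SimpleGraph.fromEdgeSet (S : Set (Sym2 V))).Reachable v u := by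
  simp [compOf]

lemma compOf_eq_compOf_iff {v w : V} :
    compOf S v = compOf S w ↔ (SimpleGraph.fromEdgeSet (S : Set (Sym2 V))).Reachable v w := by
  refine ⟨fun h => mem_compOf.1 (h ▸ mem_compOf.2 .rfl), fun h => ?_⟩
  ext u
  simp only [mem_compOf]
  exact ⟨h.symm.trans, h.trans⟩

lemma compOf_mem_kappa (v : V) : compOf S v ∈ kappa S :=
  mem_image_of_mem _ (mem_univ v)

lemma prod_kappa {M : Type*} [CommMonoid M] (h : V → M) :
    ∏ C ∈ kappa S, ∏ v ∈ C, h v = ∏ v, h v := by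
  rw [← prod_fiberwise_of_maps_to (g := compOf S) (fun v _ => compOf_mem_kappa v) h]
  refine prod_congr rfl fun C hC => ?_
  obtain ⟨w, -, rfl⟩ := mem_image.1 hC
  congr 1
  ext v
  simp [mem_compOf, compOf_eq_compOf_iff, SimpleGraph.reachable_comm]

lemma mem_monoSpins_iff {σ : V → Bool} : σ ∈ monoSpins S ↔
    ∀ x y, (SimpleGraph.fromEdgeSet (S : Set (Sym2 V))).Reachable x y → σ x = σ y := by
  simp only [monoSpins, mem_filter, mem_univ, true_and]
  constructor
  · intro hσ x y hxy
    rw [SimpleGraph.reachable_iff_reflTransGen] at hxy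
    induction hxy with
    | refl => rfl
    | tail _ hadj ih =>
      rw [SimpleGraph.fromEdgeSet_adj] at hadj
      have := hσ _ hadj.1
      rw [Sym2.map_mk, Sym2.mk_isDiag_iff] at this
      exact ih.trans this
  · intro hσ e he
    induction e with
    | _ x y =>
      rw [Sym2.map_mk, Sym2.mk_isDiag_iff]
      by_cases hxy : x = y
      · rw [hxy]
      · exact hσ x y (SimpleGraph.Adj.reachable
          (by simpa [SimpleGraph.fromEdgeSet_adj] using ⟨he, hxy⟩))

/-- A configuration constant on clusters is the choice of the set of clusters carrying
spin `true`. -/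
lemma clusterProd_eq_sum_spinWeight (lam : V → ℝ) :
    clusterProd S lam = ∑ σ ∈ monoSpins S, spinWeight lam σ := by
  rw [clusterProd, prod_one_add]
  refine sum_nbij' (fun 𝒞 v => decide (compOf S v ∈ 𝒞))
    (fun σ => (kappa S).filter fun C => ∀ v ∈ C, σ v) ?_ ?_ ?_ ?_ ?_
  · intro 𝒞 _
    rw [mem_monoSpins_iff]
    intro x y hxy
    rw [compOf_eq_compOf_iff.2 hxy]
  · intro σ _
    simp
  · intro 𝒞 h𝒞
    rw [mem_powerset] at h𝒞
    ext C
    simp only [mem_filter, decide_eq_true_eq]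
    constructor
    · rintro ⟨hC, h⟩
      obtain ⟨w, -, rfl⟩ := mem_image.1 hC
      exact h w (mem_compOf.2 .rfl)
    · intro hC
      refine ⟨h𝒞 hC, fun v hv => ?_⟩
      obtain ⟨w, -, rfl⟩ := mem_image.1 (h𝒞 hC)
      rwa [compOf_eq_compOf_iff.2 (mem_compOf.1 hv).symm]
  · intro σ hσ
    funext v
    simp only [mem_filter, compOf_mem_kappa, true_and]
    rw [Bool.eq_iff_iff, decide_eq_true_iff]
    exact ⟨fun h => h v (mem_compOf.2 .rfl),
      fun h w hw => (mem_monoSpins_iff.1 hσ v w (mem_compOf.1 hw)) ▸ h⟩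
  · intro 𝒞 h𝒞
    rw [mem_powerset] at h𝒞
    calc ∏ C ∈ 𝒞, ∏ v ∈ C, lam v = ∏ C ∈ kappa S, if C ∈ 𝒞 then ∏ v ∈ C, lam v else 1 := by
          rw [prod_ite_mem, inter_eq_right.2 h𝒞]
      _ = ∏ C ∈ kappa S, ∏ v ∈ C, if decide (compOf S v ∈ 𝒞) then lam v else 1 := ?_
      _ = _ := prod_kappa _
    refine prod_congr rfl fun C hC => ?_
    obtain ⟨w, -, rfl⟩ := mem_image.1 hC
    have hw : ∀ v ∈ compOf S w, compOf S v = compOf S w := fun v hv =>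
      compOf_eq_compOf_iff.2 (mem_compOf.1 hv).symm
    split_ifs with h
    · exact prod_congr rfl fun v hv => by simp [hw v hv, h]
    · exact (prod_eq_one fun v hv => by simp [hw v hv, h]).symm

/-- Switching off the cluster of `u` maps the configurations with `σ u ≠ σ v` injectively,
without decreasing their weight, to configurations with `σ u = σ v`. -/
lemma sum_spinWeight_true_false_le (hlam0 : ∀ v, 0 ≤ lam v) (hlam1 : ∀ v, lam v ≤ 1)
    (T : Finset (Sym2 V)) (u v : V) :
    ∑ σ ∈ (monoSpins T).filter (fun σ => σ u = true ∧ σ v = false), spinWeight lam σ ≤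
      ∑ σ ∈ (monoSpins T).filter (fun σ => σ u = σ v), spinWeight lam σ := by
  set A := compOf T u
  let clear : (V → Bool) → V → Bool := fun σ w => σ w && decide (w ∉ A)
  have htrue : ∀ σ ∈ (monoSpins T).filter (fun σ => σ u = true ∧ σ v = false),
      ∀ w ∈ A, σ w = true := fun σ hσ w hw => by
    rw [mem_filter] at hσ
    rw [← mem_monoSpins_iff.1 hσ.1 u w (mem_compOf.1 hw), hσ.2.1]
  have hmaps : ∀ σ ∈ (monoSpins T).filter (fun σ => σ u = true ∧ σ v = false),
      clear σ ∈ (monoSpins T).filter (fun σ => σ u = σ v) := by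
    intro σ hσ
    have hσ' := mem_filter.1 hσ
    refine mem_filter.2 ⟨mem_monoSpins_iff.2 fun x y hxy => ?_, ?_⟩
    · have hA : x ∈ A ↔ y ∈ A := by
        simp only [A, mem_compOf]
        exact ⟨fun h => h.trans hxy, fun h => h.trans hxy.symm⟩
      simp [clear, hA, mem_monoSpins_iff.1 hσ'.1 x y hxy]
    · simp [clear, hσ'.2.2, A, mem_compOf]
  have hinj : Set.InjOn clear ((monoSpins T).filter (fun σ => σ u = true ∧ σ v = false)) := by
    intro σ₁ h₁ σ₂ h₂ h
    funext w
    by_cases hw : w ∈ A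
    · rw [htrue σ₁ h₁ w hw, htrue σ₂ h₂ w hw]
    · simpa [clear, hw] using congrFun h w
  have hle : ∀ σ, spinWeight lam σ ≤ spinWeight lam (clear σ) := fun σ =>
    prod_le_prod (fun w _ => by split_ifs <;> simp [hlam0 w]) fun w _ => by
      cases h : σ w <;> by_cases hw : w ∈ A <;> simp [clear, h, hw, hlam1 w]
  calc _ ≤ ∑ σ ∈ (monoSpins T).filter (fun σ => σ u = true ∧ σ v = false),
        spinWeight lam (clear σ) := sum_le_sum fun σ _ => hle σ
    _ = ∑ σ ∈ ((monoSpins T).filter (fun σ => σ u = true ∧ σ v = false)).image clear,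
        spinWeight lam σ := (sum_image hinj).symm
    _ ≤ _ := sum_le_sum_of_subset_of_nonneg (image_subset_iff.2 hmaps)
        fun σ _ _ => spinWeight_nonneg hlam0 σ

lemma clusterProd_le_three_mul_insert (hlam0 : ∀ v, 0 ≤ lam v) (hlam1 : ∀ v, lam v ≤ 1)
    (T : Finset (Sym2 V)) (e : Sym2 V) :
    clusterProd T lam ≤ 3 * clusterProd (insert e T) lam := by
  induction e with
  | _ u v =>
  have hins : monoSpins (insert s(u, v) T) = (monoSpins T).filter (fun σ => σ u = σ v) := by
    ext σ
    simp [monoSpins, Sym2.map_mk, and_comm]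
  have hsplit : (monoSpins T).filter (fun σ => ¬σ u = σ v) =
      (monoSpins T).filter (fun σ => σ u = true ∧ σ v = false) ∪
        (monoSpins T).filter (fun σ => σ v = true ∧ σ u = false) := by
    ext σ
    simp only [mem_filter, mem_union]
    cases σ u <;> cases σ v <;> simp
  have hdisj : Disjoint ((monoSpins T).filter (fun σ => σ u = true ∧ σ v = false))
      ((monoSpins T).filter (fun σ => σ v = true ∧ σ u = false)) :=
    disjoint_filter.2 fun σ _ h₁ h₂ => by simp [h₁.1] at h₂
  have h₁ := sum_spinWeight_true_false_le hlam0 hlam1 T u v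
  have h₂ := sum_spinWeight_true_false_le hlam0 hlam1 T v u
  rw [show (monoSpins T).filter (fun σ => σ v = σ u) = (monoSpins T).filter (fun σ => σ u = σ v)
    from filter_congr fun σ _ => eq_comm] at h₂
  rw [clusterProd_eq_sum_spinWeight, clusterProd_eq_sum_spinWeight, hins,
    ← sum_filter_add_sum_filter_not (monoSpins T) (fun σ => σ u = σ v), hsplit,
    sum_union hdisj]
  linarith

end Clusters

section SwendsenWang

variable {V : Type*} [DecidableEq V] (E₀ : Finset (Sym2 V)) (β : Sym2 V → ℝ) (lam : V → ℝ)

lemma sum_PIR (σ : V → Bool) : ∑ S ∈ E₀.powerset, PIR E₀ β σ S = 1 := by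
  have hM : E₀.powerset.filter (· ⊆ monoEdges E₀ σ) = (monoEdges E₀ σ).powerset := by
    ext S
    simp only [mem_filter, mem_powerset]
    exact ⟨And.right, fun h => ⟨h.trans (filter_subset _ _), h⟩⟩
  simp only [PIR]
  rw [← sum_filter, hM, ← prod_add]
  exact prod_eq_one fun e _ => by ring

variable [Fintype V]

lemma PRI_eq (S : Finset (Sym2 V)) (σ : V → Bool) :
    PRI E₀ lam S σ =
      if S ⊆ monoEdges E₀ σ then spinWeight lam σ / clusterProd S lam else 0 := by
  rw [PRI, prod_div_distrib, prod_kappa]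
  rfl

variable {lam} in
lemma clusterProd_pos (hlam : ∀ v, 0 ≤ lam v) (S : Finset (Sym2 V)) : 0 < clusterProd S lam :=
  prod_pos fun C _ => by linarith [prod_nonneg fun v (_ : v ∈ C) => hlam v]

variable {E₀ lam} in
lemma sum_PRI (hlam : ∀ v, 0 ≤ lam v) {S : Finset (Sym2 V)} (hS : S ⊆ E₀) :
    ∑ σ, PRI E₀ lam S σ = 1 := by
  simp_rw [PRI_eq, subset_monoEdges_iff hS]
  rw [sum_ite_mem, univ_inter, ← sum_div, ← clusterProd_eq_sum_spinWeight,
    div_self (clusterProd_pos hlam S).ne']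

variable {E₀ β lam}

/-- The Edwards–Sokal coupling. -/
lemma wtIsing_mul_PIR (hβ : ∀ e ∈ E₀, β e ≠ 0) (hlam : ∀ v, 0 ≤ lam v)
    {S : Finset (Sym2 V)} (hS : S ⊆ E₀) (σ : V → Bool) :
    wtIsing E₀ β lam σ * PIR E₀ β σ S =
      (∏ e ∈ E₀, β e) * (wtWRC E₀ (fun e => 1 - (β e)⁻¹) lam S * PRI E₀ lam S σ) := by
  rw [PRI_eq, PIR]
  split_ifs with hσ
  · have hM := prod_mul_prod_sdiff_inv hσ fun e he => hβ e (filter_subset _ _ he)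
    have hE := prod_mul_prod_sdiff_inv hS hβ
    have hc := mul_inv_cancel₀ (clusterProd_pos hlam S).ne'
    simp only [wtIsing, wtWRC, sub_sub_cancel, div_eq_mul_inv]
    rw [← spinWeight]
    set P := ∏ e ∈ S, (1 - (β e)⁻¹)
    linear_combination (spinWeight lam σ * P) * hM
      - (spinWeight lam σ * P * clusterProd S lam * (clusterProd S lam)⁻¹) * hE
      - (spinWeight lam σ * P * ∏ e ∈ S, β e) * hc
  · simp

lemma ZIsing_eq (hβ : ∀ e ∈ E₀, β e ≠ 0) (hlam : ∀ v, 0 ≤ lam v) :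
    ZIsing E₀ β lam = (∏ e ∈ E₀, β e) * ZWRC E₀ (fun e => 1 - (β e)⁻¹) lam := by
  calc ZIsing E₀ β lam = ∑ σ, ∑ S ∈ E₀.powerset, wtIsing E₀ β lam σ * PIR E₀ β σ S := by
        simp only [ZIsing, ← mul_sum, sum_PIR, mul_one]
    _ = ∑ S ∈ E₀.powerset, ∑ σ, (∏ e ∈ E₀, β e) *
          (wtWRC E₀ (fun e => 1 - (β e)⁻¹) lam S * PRI E₀ lam S σ) := by
        rw [sum_comm]
        exact sum_congr rfl fun S hS => sum_congr rfl fun σ _ =>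
          wtIsing_mul_PIR hβ hlam (mem_powerset.1 hS) σ
    _ = _ := by
        rw [ZWRC, mul_sum]
        exact sum_congr rfl fun S hS => by
          rw [← mul_sum, ← mul_sum, sum_PRI hlam (mem_powerset.1 hS), mul_one]

theorem isAdjointPair_PIR_PRI (hβ : ∀ e ∈ E₀, β e ≠ 0) (hlam : ∀ v, 0 ≤ lam v) :
    IsAdjointPair univ E₀.powerset (piIsing E₀ β lam) (piWRC E₀ (fun e => 1 - (β e)⁻¹) lam)
      (PIR E₀ β) (PRI E₀ lam) where
  sum_left σ _ := sum_PIR E₀ β σ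
  sum_right _ hS := sum_PRI hlam (mem_powerset.1 hS)
  balance σ _ S hS := by
    rw [piIsing, piWRC, div_mul_eq_mul_div, div_mul_eq_mul_div,
      wtIsing_mul_PIR hβ hlam (mem_powerset.1 hS), ZIsing_eq hβ hlam,
      mul_div_mul_left _ _ (prod_ne_zero_iff.2 hβ)]

lemma piIsing_pos_and_sum (hβ : ∀ e ∈ E₀, 0 < β e) (hlam : ∀ v, 0 < lam v) :
    (∀ σ, 0 < piIsing E₀ β lam σ) ∧ ∑ σ, piIsing E₀ β lam σ = 1 := by
  have hwt : ∀ σ, 0 < wtIsing E₀ β lam σ := fun σ =>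
    mul_pos (prod_pos fun e he => hβ e (filter_subset _ _ he))
      (prod_pos fun v _ => by split_ifs; exacts [hlam v, one_pos])
  have hZ : 0 < ZIsing E₀ β lam := sum_pos (fun σ _ => hwt σ) univ_nonempty
  refine ⟨fun σ => div_pos (hwt σ) hZ, ?_⟩
  simp only [piIsing, ← sum_div]
  exact div_self hZ.ne'

lemma piWRC_pos_and_sum (hβ : ∀ e ∈ E₀, 1 < β e) (hlam : ∀ v, 0 ≤ lam v) :
    (∀ S ∈ E₀.powerset, 0 < piWRC E₀ (fun e => 1 - (β e)⁻¹) lam S) ∧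
      ∑ S ∈ E₀.powerset, piWRC E₀ (fun e => 1 - (β e)⁻¹) lam S = 1 := by
  have hwt : ∀ S ∈ E₀.powerset, 0 < wtWRC E₀ (fun e => 1 - (β e)⁻¹) lam S := fun S hS => by
    refine mul_pos (mul_pos (prod_pos fun e he => ?_) (prod_pos fun e he => ?_))
      (clusterProd_pos hlam S)
    · exact sub_pos.2 (inv_lt_one_of_one_lt₀ (hβ e (mem_powerset.1 hS he)))
    · simpa using zero_lt_one.trans (hβ e (mem_sdiff.1 he).1)
  have hZ : 0 < ZWRC E₀ (fun e => 1 - (β e)⁻¹) lam :=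
    sum_pos hwt ⟨∅, empty_mem_powerset E₀⟩
  refine ⟨fun S hS => div_pos (hwt S hS) hZ, ?_⟩
  simp only [piWRC, ← sum_div]
  exact div_self hZ.ne'

end SwendsenWang

section Percolation

variable {V : Type*} [DecidableEq V] {E₀ : Finset (Sym2 V)} {β : Sym2 V → ℝ}

lemma PIR_nonneg (hβ : ∀ e ∈ E₀, 1 ≤ β e) (σ : V → Bool) (S : Finset (Sym2 V)) :
    0 ≤ PIR E₀ β σ S := by
  unfold PIR
  split_ifs with h
  · have hβM : ∀ e ∈ monoEdges E₀ σ, 1 ≤ β e := fun e he => hβ e (filter_subset _ _ he)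
    exact mul_nonneg (prod_nonneg fun e he => sub_nonneg.2 (inv_le_one_of_one_le₀ (hβM e (h he))))
      (prod_nonneg fun e he => inv_nonneg.2 (zero_le_one.trans (hβM e (mem_sdiff.1 he).1)))
  · exact le_rfl

lemma two_point_bound {w₀ w₁ p x y c : ℝ} (hp : 0 < p) (hw₁ : 0 ≤ w₁)
    (hw : w₀ * p = w₁ * (1 - p)) :
    (1 - p) * (w₁ * (y - x) ^ 2) ≤ w₀ * (x - c) ^ 2 + w₁ * (y - c) ^ 2 := by
  have key : p * (w₀ * (x - c) ^ 2 + w₁ * (y - c) ^ 2) - p * ((1 - p) * (w₁ * (y - x) ^ 2)) =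
      w₁ * ((1 - p) * (x - c) + p * (y - c)) ^ 2 := by
    linear_combination (x - c) ^ 2 * hw
  refine le_of_mul_le_mul_left ?_ hp
  nlinarith [mul_nonneg hw₁ (sq_nonneg ((1 - p) * (x - c) + p * (y - c)))]

/-- Conditioning on all edges but `e` can only decrease the variance. -/
lemma mul_sum_PIR_insert_le (hβ : ∀ e ∈ E₀, 1 < β e) (σ : V → Bool) {e : Sym2 V} (he : e ∈ E₀)
    (g : Finset (Sym2 V) → ℝ) (c : ℝ) :
    (β e)⁻¹ * ∑ T ∈ (E₀.erase e).powerset, PIR E₀ β σ (insert e T) * (g (insert e T) - g T) ^ 2 ≤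
      ∑ S ∈ E₀.powerset, PIR E₀ β σ S * (g S - c) ^ 2 := by
  have hβ' : ∀ e ∈ E₀, 1 ≤ β e := fun e he => (hβ e he).le
  rw [sum_powerset_eq_sum_powerset_erase he, mul_sum]
  refine sum_le_sum fun T hT => ?_
  have heT : e ∉ T := fun h => notMem_erase e E₀ (mem_powerset.1 hT h)
  by_cases hsub : insert e T ⊆ monoEdges E₀ σ
  · have hrel : PIR E₀ β σ T * (1 - (β e)⁻¹) = PIR E₀ β σ (insert e T) * (1 - (1 - (β e)⁻¹)) := by
      rw [sub_sub_cancel, PIR, PIR, if_pos ((subset_insert e T).trans hsub), if_pos hsub]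
      exact (prod_insert_mul_prod_sdiff_insert _ _ (hsub (mem_insert_self e T)) heT).symm
    simpa using two_point_bound (sub_pos.2 (inv_lt_one_of_one_lt₀ (hβ e he)))
      (PIR_nonneg hβ' σ _) hrel (x := g T) (y := g (insert e T)) (c := c)
  · have h0 : PIR E₀ β σ (insert e T) = 0 := if_neg hsub
    rw [h0, zero_mul, mul_zero]
    exact add_nonneg (mul_nonneg (PIR_nonneg hβ' σ T) (sq_nonneg _)) (by simp)

lemma sum_mul_sum_PIR_insert_le (hβ : ∀ e ∈ E₀, 1 < β e) (σ : V → Bool)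
    (g : Finset (Sym2 V) → ℝ) :
    ∑ e ∈ E₀, (β e)⁻¹ * ∑ T ∈ (E₀.erase e).powerset,
        PIR E₀ β σ (insert e T) * (g (insert e T) - g T) ^ 2 ≤
      #E₀ * varOn E₀.powerset (PIR E₀ β σ) g := by
  rw [varOn_eq_sum_mul_sq_sub_mean (sum_PIR E₀ β σ), ← nsmul_eq_mul, ← sum_const]
  exact sum_le_sum fun e he => mul_sum_PIR_insert_le hβ σ he g _

end Percolation

section EdgeFlip

variable {V : Type*} [DecidableEq V] {E₀ : Finset (Sym2 V)} {μ : Finset (Sym2 V) → ℝ}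

lemma symmDiff_singleton_of_notMem {T : Finset (Sym2 V)} {e : Sym2 V} (h : e ∉ T) :
    symmDiff T {e} = insert e T := by
  ext x
  by_cases hx : x = e <;> simp [mem_symmDiff, hx, h]

lemma insert_symmDiff_singleton {T : Finset (Sym2 V)} {e : Sym2 V} (h : e ∉ T) :
    symmDiff (insert e T) {e} = T := by
  rw [← symmDiff_singleton_of_notMem h, symmDiff_symmDiff_cancel_right]

lemma sum_erase_PEF_mul {x : Finset (Sym2 V)} (hx : x ∈ E₀.powerset)
    (F : Finset (Sym2 V) → ℝ) :
    ∑ y ∈ E₀.powerset.erase x, PEF E₀ μ x y * F y =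
      ∑ e ∈ E₀, 1 / (2 * (#E₀ : ℝ)) * min 1 (μ (symmDiff x {e}) / μ x) * F (symmDiff x {e}) := by
  have hinj : Set.InjOn (fun e => symmDiff x {e}) E₀ := fun e _ e' _ h =>
    singleton_injective (symmDiff_right_injective x h)
  have hne : ∀ e, x ≠ symmDiff x {e} := fun e h => by
    simpa using (symmDiff_symmDiff_cancel_left x {e}).symm.trans (congrArg (symmDiff x) h.symm)
  have himage : E₀.image (fun e => symmDiff x {e}) ⊆ E₀.powerset.erase x := by
    simp only [subset_iff, mem_image, mem_erase, mem_powerset]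
    rintro _ ⟨e, he, rfl⟩
    refine ⟨(hne e).symm, fun a ha => ?_⟩
    rcases mem_symmDiff.1 ha with ⟨ha, -⟩ | ⟨ha, -⟩
    · exact mem_powerset.1 hx ha
    · exact mem_singleton.1 ha ▸ he
  have hzero : ∀ y ∈ E₀.powerset.erase x, y ∉ E₀.image (fun e => symmDiff x {e}) →
      PEF E₀ μ x y * F y = 0 := by
    intro y hy hyim
    obtain ⟨hyx, hy⟩ := mem_erase.1 hy
    rw [PEF, if_neg (Ne.symm hyx), if_neg, zero_mul]
    intro hcard
    obtain ⟨e, he⟩ := card_eq_one.1 hcard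
    have heE : e ∈ E₀ := by
      have : e ∈ symmDiff x y := he ▸ mem_singleton_self e
      exact union_subset (mem_powerset.1 hx) (mem_powerset.1 hy) (symmDiff_subset_union this)
    exact hyim (mem_image.2 ⟨e, heE, by rw [← he, symmDiff_symmDiff_cancel_left]⟩)
  rw [← sum_subset himage hzero, sum_image hinj]
  refine sum_congr rfl fun e _ => ?_
  rw [PEF, if_neg (hne e), if_pos (by rw [symmDiff_symmDiff_cancel_left, card_singleton])]

lemma dirichletOn_PEF (hμ : ∀ S ∈ E₀.powerset, 0 < μ S) (g : Finset (Sym2 V) → ℝ) :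
    dirichletOn E₀.powerset μ (PEF E₀ μ) g =
      1 / (2 * (#E₀ : ℝ)) * ∑ e ∈ E₀, ∑ T ∈ (E₀.erase e).powerset,
        min (μ T) (μ (insert e T)) * (g (insert e T) - g T) ^ 2 := by
  have hx : ∀ x ∈ E₀.powerset,
      μ x * g x * (g x - ∑ y ∈ E₀.powerset, PEF E₀ μ x y * g y) =
        ∑ e ∈ E₀, 1 / (2 * (#E₀ : ℝ)) *
          (min (μ x) (μ (symmDiff x {e})) * (g x * (g x - g (symmDiff x {e})))) := by
    intro x hx
    have hmin : ∀ e, min (μ x) (μ (symmDiff x {e})) = μ x * min 1 (μ (symmDiff x {e}) / μ x) :=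
      fun e => by rw [mul_min_of_nonneg _ _ (hμ x hx).le, mul_one, mul_div_cancel₀ _ (hμ x hx).ne']
    have hterm : ∀ e, 1 / (2 * (#E₀ : ℝ)) * (min (μ x) (μ (symmDiff x {e})) *
          (g x * (g x - g (symmDiff x {e})))) =
        μ x * g x * (1 / (2 * (#E₀ : ℝ)) * min 1 (μ (symmDiff x {e}) / μ x) * g x) -
          μ x * g x * (1 / (2 * (#E₀ : ℝ)) * min 1 (μ (symmDiff x {e}) / μ x) *
            g (symmDiff x {e})) := fun e => by
      rw [hmin]
      ring
    rw [← add_sum_erase _ _ hx, sum_erase_PEF_mul hx, PEF, if_pos rfl]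
    simp only [hterm, sum_sub_distrib, ← mul_sum, ← sum_mul]
    ring
  rw [dirichletOn, sum_congr rfl hx, sum_comm, mul_sum]
  refine sum_congr rfl fun e he => ?_
  rw [sum_powerset_eq_sum_powerset_erase he, mul_sum]
  refine sum_congr rfl fun T hT => ?_
  have heT : e ∉ T := fun h => notMem_erase e E₀ (mem_powerset.1 hT h)
  rw [symmDiff_singleton_of_notMem heT, insert_symmDiff_singleton heT, min_comm (μ (insert e T))]
  ring

lemma dirichletOn_PEF_nonneg (hμ : ∀ S ∈ E₀.powerset, 0 < μ S) (g : Finset (Sym2 V) → ℝ) :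
    0 ≤ dirichletOn E₀.powerset μ (PEF E₀ μ) g := by
  rw [dirichletOn_PEF hμ]
  refine mul_nonneg (by positivity) (sum_nonneg fun e he => sum_nonneg fun T hT => ?_)
  have hT' := (mem_powerset.1 hT).trans (erase_subset e E₀)
  exact mul_nonneg (le_min (hμ T (mem_powerset.2 hT')).le
    (hμ _ (mem_powerset.2 (insert_subset he hT'))).le) (sq_nonneg _)

end EdgeFlip

section Comparison

variable {V : Type*} [Fintype V] [DecidableEq V] {E₀ : Finset (Sym2 V)} {β : Sym2 V → ℝ}
  {lam : V → ℝ}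

lemma min_piWRC_le (hβ : ∀ e ∈ E₀, 1 < β e) (hlam0 : ∀ v, 0 ≤ lam v) (hlam1 : ∀ v, lam v ≤ 1)
    {e : Sym2 V} {T : Finset (Sym2 V)} (he : e ∈ E₀) (heT : e ∉ T) (hT : T ⊆ E₀) :
    min (piWRC E₀ (fun e => 1 - (β e)⁻¹) lam T)
        (piWRC E₀ (fun e => 1 - (β e)⁻¹) lam (insert e T)) ≤
      4 * (β e)⁻¹ * piWRC E₀ (fun e => 1 - (β e)⁻¹) lam (insert e T) := by
  obtain ⟨hpos, -⟩ := piWRC_pos_and_sum hβ hlam0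
  have hT₀ := hpos T (mem_powerset.2 hT)
  have hT₁ := hpos (insert e T) (mem_powerset.2 (insert_subset he hT))
  set π := piWRC E₀ (fun e => 1 - (β e)⁻¹) lam
  set r := (β e)⁻¹
  have hrel : π (insert e T) * r * clusterProd T lam =
      π T * (1 - r) * clusterProd (insert e T) lam := by
    have := prod_insert_mul_prod_sdiff_insert (fun e => 1 - (β e)⁻¹)
      (fun f => 1 - (1 - (β f)⁻¹)) he heT
    simp only [π, piWRC, wtWRC, div_mul_eq_mul_div]
    rw [sub_sub_cancel] at this
    congr 1
    linear_combination (clusterProd T lam * clusterProd (insert e T) lam) * this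
  have hc := clusterProd_le_three_mul_insert hlam0 hlam1 T e
  have hc₁ := clusterProd_pos hlam0 (insert e T)
  have hr : 0 < r := inv_pos.2 (zero_lt_one.trans (hβ e he))
  have h3 : π T * (1 - r) ≤ 3 * r * π (insert e T) := by
    refine le_of_mul_le_mul_right ?_ hc₁
    nlinarith [mul_le_mul_of_nonneg_left hc (mul_pos hT₁ hr).le]
  rcases le_or_gt (1 / 4) r with hr4 | hr4
  · exact (min_le_right _ _).trans (by nlinarith)
  · exact (min_le_left _ _).trans (by nlinarith)

lemma PSWwrc_eq_kernelComp : PSWwrc E₀ β lam = kernelComp univ (PRI E₀ lam) (PIR E₀ β) := rfl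

/-- Marginalising the Edwards–Sokal coupling over the spins turns the single-edge variance
bounds for the product measures `P_{I→R}(σ, ·)` into a bound for `π_wrc`. -/
lemma sum_inv_mul_sum_piWRC_insert_le (hβ : ∀ e ∈ E₀, 1 < β e) (hlam : ∀ v, 0 < lam v)
    (g : Finset (Sym2 V) → ℝ) :
    ∑ e ∈ E₀, (β e)⁻¹ * ∑ T ∈ (E₀.erase e).powerset,
        piWRC E₀ (fun e => 1 - (β e)⁻¹) lam (insert e T) * (g (insert e T) - g T) ^ 2 ≤
      #E₀ * ∑ σ, piIsing E₀ β lam σ * varOn E₀.powerset (PIR E₀ β σ) g := by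
  have hpair := isAdjointPair_PIR_PRI (fun e he => (zero_lt_one.trans (hβ e he)).ne')
    fun v => (hlam v).le
  obtain ⟨hπI, -⟩ := piIsing_pos_and_sum (fun e he => zero_lt_one.trans (hβ e he)) hlam
  have hmarg : ∑ e ∈ E₀, (β e)⁻¹ * ∑ T ∈ (E₀.erase e).powerset,
        piWRC E₀ (fun e => 1 - (β e)⁻¹) lam (insert e T) * (g (insert e T) - g T) ^ 2 =
      ∑ σ, piIsing E₀ β lam σ * ∑ e ∈ E₀, (β e)⁻¹ * ∑ T ∈ (E₀.erase e).powerset,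
        PIR E₀ β σ (insert e T) * (g (insert e T) - g T) ^ 2 := by
    simp only [mul_sum]
    rw [sum_comm]
    refine sum_congr rfl fun e he => ?_
    rw [sum_comm]
    refine sum_congr rfl fun T hT => ?_
    have hins : insert e T ∈ E₀.powerset :=
      mem_powerset.2 (insert_subset he ((mem_powerset.1 hT).trans (erase_subset e E₀)))
    rw [← hpair.sum_mul_left hins, sum_mul, mul_sum]
    exact sum_congr rfl fun σ _ => by ring
  rw [hmarg, mul_sum]
  exact sum_le_sum fun σ _ => (mul_le_mul_of_nonneg_left (sum_mul_sum_PIR_insert_le hβ σ g)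
    (hπI σ).le).trans_eq (mul_left_comm _ _ _)

theorem dirichletOn_PEF_le (hβ : ∀ e ∈ E₀, 1 < β e) (hlam : ∀ v, 0 < lam v ∧ lam v ≤ 1)
    (g : Finset (Sym2 V) → ℝ) :
    dirichletOn E₀.powerset (piWRC E₀ (fun e => 1 - (β e)⁻¹) lam)
        (PEF E₀ (piWRC E₀ (fun e => 1 - (β e)⁻¹) lam)) g ≤
      2 * dirichletOn E₀.powerset (piWRC E₀ (fun e => 1 - (β e)⁻¹) lam) (PSWwrc E₀ β lam) g := by
  have hlam0 : ∀ v, 0 ≤ lam v := fun v => (hlam v).1.le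
  have hpair := isAdjointPair_PIR_PRI (fun e he => (zero_lt_one.trans (hβ e he)).ne') hlam0
  obtain ⟨hπR, -⟩ := piWRC_pos_and_sum hβ hlam0
  obtain ⟨hπI, -⟩ :=
    piIsing_pos_and_sum (fun e he => zero_lt_one.trans (hβ e he)) fun v => (hlam v).1
  set π := piWRC E₀ (fun e => 1 - (β e)⁻¹) lam
  set X := ∑ σ, piIsing E₀ β lam σ * varOn E₀.powerset (PIR E₀ β σ) g
  have hX : 0 ≤ X := sum_nonneg fun σ _ => mul_nonneg (hπI σ).le
    (varOn_nonneg (fun S _ => PIR_nonneg (fun e he => (hβ e he).le) σ S) (sum_PIR E₀ β σ) g)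
  have hκ : 1 / (2 * (#E₀ : ℝ)) * 4 * #E₀ ≤ 2 := by
    rcases eq_or_ne (#E₀ : ℝ) 0 with h | h
    · simp [h]
    · rw [div_mul_eq_mul_div, div_mul_eq_mul_div, div_le_iff₀ (by positivity)]
      linarith
  rw [dirichletOn_PEF hπR, PSWwrc_eq_kernelComp, hpair.dirichletOn_kernelComp_symm]
  calc 1 / (2 * (#E₀ : ℝ)) * ∑ e ∈ E₀, ∑ T ∈ (E₀.erase e).powerset,
        min (π T) (π (insert e T)) * (g (insert e T) - g T) ^ 2
      ≤ 1 / (2 * (#E₀ : ℝ)) * ∑ e ∈ E₀, ∑ T ∈ (E₀.erase e).powerset,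
        4 * (β e)⁻¹ * π (insert e T) * (g (insert e T) - g T) ^ 2 := by
        gcongr with e he T hT
        exact min_piWRC_le hβ hlam0 (fun v => (hlam v).2) he
          (fun h => notMem_erase e E₀ (mem_powerset.1 hT h))
          ((mem_powerset.1 hT).trans (erase_subset e E₀))
    _ = 1 / (2 * (#E₀ : ℝ)) * 4 * ∑ e ∈ E₀, (β e)⁻¹ * ∑ T ∈ (E₀.erase e).powerset,
        π (insert e T) * (g (insert e T) - g T) ^ 2 := by
        simp only [mul_sum, mul_assoc]
    _ ≤ 1 / (2 * (#E₀ : ℝ)) * 4 * (#E₀ * X) := by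
        gcongr
        exact sum_inv_mul_sum_piWRC_insert_le hβ (fun v => (hlam v).1) g
    _ ≤ 2 * X := by
        rw [← mul_assoc]
        exact mul_le_mul_of_nonneg_right hκ hX

/-- Comparison of the Swendsen-Wang dynamics for the Ising model and the edge-flipping
dynamics for the weighted random cluster model with `p_e = 1 − 1/β_e`:
`Gap(P_SW^Ising) ≥ Gap(P_EF)/3`. -/
theorem sw_ising_vs_edge_flip_gap {V : Type*} [Fintype V] [DecidableEq V]
    (G : SimpleGraph V) [DecidableRel G.Adj]
    (β : Sym2 V → ℝ) (lam : V → ℝ)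
    (hβ : ∀ e ∈ G.edgeFinset, 1 < β e)
    (hlam : ∀ v : V, 0 < lam v ∧ lam v ≤ 1) :
    gapOn (Finset.univ : Finset (V → Bool)) (piIsing G.edgeFinset β lam)
        (PSWIsing G.edgeFinset β lam) ≥
      gapOn G.edgeFinset.powerset (piWRC G.edgeFinset (fun e => 1 - (β e)⁻¹) lam)
        (PEF G.edgeFinset (piWRC G.edgeFinset (fun e => 1 - (β e)⁻¹) lam)) / 3 := by
  obtain ⟨hπI, hπI1⟩ := piIsing_pos_and_sum (fun e he => zero_lt_one.trans (hβ e he))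
    fun v => (hlam v).1
  obtain ⟨hπR, hπR1⟩ := piWRC_pos_and_sum hβ fun v => (hlam v).1.le
  have hVR := varOn_nonneg (fun S hS => (hπR S hS).le) hπR1
  have hEF := dirichletOn_PEF_nonneg hπR
  refine le_trans (div_le_div_of_nonneg_left (gapOn_nonneg hEF hVR) two_pos (by norm_num))
    ((isAdjointPair_PIR_PRI (fun e he => (zero_lt_one.trans (hβ e he)).ne')
      fun v => (hlam v).1.le).div_le_gapOn_kernelComp (fun σ _ => (hπI σ).le) hπI1
        (fun S hS => (hπR S hS).le) hπR1 two_pos hEF (dirichletOn_PEF_le hβ hlam) ?_)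
  rcases G.edgeFinset.eq_empty_or_nonempty with hE | ⟨e, -⟩
  · exact Or.inl (gapOn_le_of_dirichletOn_le hEF hVR le_rfl fun g => by
      rw [dirichletOn_PEF hπR, hE]
      simp)
  · obtain ⟨v⟩ : Nonempty V := e.inductionOn fun v _ => ⟨v⟩
    exact Or.inr (exists_varOn_ne_zero (fun σ _ => hπI σ) hπI1 (mem_univ fun _ => false)
      (mem_univ fun _ => true) fun h => Bool.false_ne_true (congrFun h v))

end Comparison
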